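/- arXiv:1402.4213 — 2 statements merged into one kernel-verified Lean document; each statement's English description precedes it below -/
import Mathlib

section
/- Let X_m be the Kronecker quantum cluster variables (X_{m-1}X_{m+1} = qX_m² + 1 in the skew field of T with X₁X₂ = qX₂X₁). Then consecutive cluster variables quasi-commute: X_m X_{m+1} = q X_{m+1} X_m for all m ∈ ℤ. -/
/-!
The exchange relation `X (m-1) * X (m+1) = q • X m ^ 2 + 1` makes `X (m-1) * X (m+1)` a polynomial
in `X m`, so it commutes with `X m`. Given that `X (m-1)` and `X m` quasi-commute, moving `X m`
past this product and cancelling the nonzero factor `X (m-1)` on the left shows that `X m` and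
`X (m+1)` quasi-commute; cancelling `X (m+1)` on the right gives the converse step. Induction in
both directions from `X 1 * X 2 = q • (X 2 * X 1)` finishes the proof.
-/

lemma commute_smul_sq_add_one {K R : Type*} [CommSemiring K] [Semiring R] [Algebra K R]
    (q : K) (v : R) : Commute v (q • v ^ 2 + 1) :=
  (((Commute.refl v).pow_right 2).smul_right q).add_right (Commute.one_right v)

section QuasiCommute

variable {K R : Type*} [CommSemiring K] [Ring R] [NoZeroDivisors R] [Algebra K R]

lemma quasiCommute_of_exchange_of_left {q : K} {u v w : R} (hu : u ≠ 0)
    (huv : u * v = q • (v * u)) (huw : u * w = q • v ^ 2 + 1) :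
    v * w = q • (w * v) := by
  apply mul_left_cancel₀ hu
  calc u * (v * w) = q • (v * (u * w)) := by rw [← mul_assoc, huv, smul_mul_assoc, mul_assoc]
    _ = q • ((u * w) * v) := by rw [huw, commute_smul_sq_add_one q v]
    _ = u * (q • (w * v)) := by rw [mul_smul_comm, mul_assoc]

lemma quasiCommute_of_exchange_of_right {q : K} {u v w : R} (hw : w ≠ 0)
    (hvw : v * w = q • (w * v)) (huw : u * w = q • v ^ 2 + 1) :
    u * v = q • (v * u) := by
  apply mul_right_cancel₀ hw
  calc (u * v) * w = q • ((u * w) * v) := by rw [mul_assoc, hvw, mul_smul_comm, ← mul_assoc]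
    _ = q • (v * (u * w)) := by rw [huw, commute_smul_sq_add_one q v]
    _ = (q • (v * u)) * w := by rw [smul_mul_assoc, mul_assoc]

end QuasiCommute

theorem kronecker_consecutive_quasi_commute_general
    {K : Type*} [Field K] {F : Type*} [DivisionRing F] [Algebra K F]
    (q : K)
    (X : ℤ → F) (hne : ∀ m : ℤ, X m ≠ 0)
    (hrel : X 1 * X 2 = q • (X 2 * X 1))
    (hrec : ∀ m : ℤ, X (m - 1) * X (m + 1) = q • (X m) ^ 2 + 1) :
    ∀ m : ℤ, X m * X (m + 1) = q • (X (m + 1) * X m) := by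
  intro m
  induction m using Int.inductionOn' (b := 1) with
  | zero => exact hrel
  | succ k _ ih =>
    refine quasiCommute_of_exchange_of_left (hne k) ih ?_
    simpa using hrec (k + 1)
  | pred k _ ih =>
    rw [sub_add_cancel]
    exact quasiCommute_of_exchange_of_right (hne (k + 1)) ih (hrec k)

/-- Let `X_m` be the Kronecker quantum cluster variables
(`X_{m-1}X_{m+1} = qX_m² + 1` in the skew field of the quantum torus with
`X₁X₂ = qX₂X₁`). Then consecutive cluster variables quasi-commute:
`X_m X_{m+1} = q X_{m+1} X_m` for all `m ∈ ℤ`. -/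
theorem kronecker_consecutive_quasi_commute
    {K : Type*} [Field K] {F : Type*} [DivisionRing F] [Algebra K F]
    (q : K) (hq : q ≠ 0)
    (X : ℤ → F) (hne : ∀ m : ℤ, X m ≠ 0)
    (hrel : X 1 * X 2 = q • (X 2 * X 1))
    (hrec : ∀ m : ℤ, X (m - 1) * X (m + 1) = q • (X m) ^ 2 + 1) :
    ∀ m : ℤ, X m * X (m + 1) = q • (X (m + 1) * X m) :=
  kronecker_consecutive_quasi_commute_general q X hne hrel hrec
end

section
/- Let B̃ be an m×n integer matrix and Λ a skew-symmetric m×m integer matrix with Λ(−B̃) = [I_n; 0] (compatibility with D = I_n). If B̃' is the matrix mutation of B̃ in direction k (b'_{ij} = −b_{ij} if i = k or j = k, else b'_{ij} = b_{ij} + sgn(b_{ik})[b_{ik}b_{kj}]_+) and Λ' = EᵀΛE with E the mutation involution matrix, then Λ'(−B̃') = [I_n; 0], i.e., compatibility is preserved under mutation. -/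
/-!
The mutated matrix factors as `B' = E B Fᵀ`, where `F` is the `n × n` mutation matrix built from
row `k` of `B`. Skew-symmetry of the principal part of `B` makes `F` the principal block of `E`,
i.e. `P E = F P` for the projection `P = [I_n | 0]`. With `E² = 1` and `F² = 1` this gives
`Λ'(-B') = Eᵀ Λ(-B) Fᵀ = Eᵀ Pᵀ Fᵀ = (F P E)ᵀ = (F F P)ᵀ = Pᵀ`.
-/

open Matrix

theorem Int.sign_mul_max_zero_mul (x y : ℤ) :
    x.sign * max 0 (x * y) = x * max 0 y + max 0 (-x) * y := by
  rcases lt_trichotomy x 0 with hx | rfl | hx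
  · rw [Int.sign_eq_neg_one_of_neg hx]
    simp only [max_def]
    split_ifs <;> nlinarith
  · simp
  · rw [Int.sign_eq_one_of_pos hx]
    simp only [max_def]
    split_ifs <;> nlinarith

namespace Matrix

variable {ι ι' α R : Type*} [DecidableEq ι] [DecidableEq ι']

/-- The involution `E` of Berenstein–Zelevinsky; the entry `v κ` is ignored. -/
def mutationMatrix [Zero R] [One R] [Neg R] (κ : ι) (v : ι → R) : Matrix ι ι R :=
  of fun i j => if j ≠ κ then (if i = j then 1 else 0) else if i = κ then -1 else v i

section CommRing

variable [CommRing R]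

theorem mutationMatrix_mul_apply [Fintype ι] (κ : ι) (v : ι → R) (M : Matrix ι α R) (i : ι)
    (j : α) :
    (mutationMatrix κ v * M) i j = if i = κ then -M κ j else M i j + v i * M κ j := by
  rw [mul_apply]
  by_cases hi : i = κ
  · subst hi
    rw [Finset.sum_eq_single i (fun l _ hl => by simp [mutationMatrix, hl, Ne.symm hl])
      (by simp)]
    simp [mutationMatrix]
  · rw [Finset.sum_eq_add i κ hi (fun l _ hl => by simp [mutationMatrix, hl.2, Ne.symm hl.1])
      (by simp) (by simp)]
    simp [mutationMatrix, hi, mul_comm]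

theorem mul_transpose_mutationMatrix_apply [Fintype ι] (κ : ι) (v : ι → R) (M : Matrix α ι R)
    (i : α) (j : ι) :
    (M * (mutationMatrix κ v)ᵀ) i j = if j = κ then -M i κ else M i j + M i κ * v j := by
  rw [← transpose_apply (M * _), transpose_mul, transpose_transpose, mutationMatrix_mul_apply]
  simp only [transpose_apply, mul_comm]

theorem mutationMatrix_mul_self [Fintype ι] (κ : ι) (v : ι → R) :
    mutationMatrix κ v * mutationMatrix κ v = 1 := by
  ext i j
  rw [mutationMatrix_mul_apply]
  by_cases hi : i = κ <;> by_cases hj : j = κ <;>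
    simp [mutationMatrix, one_apply, hi, hj, eq_comm (a := κ)]

theorem one_submatrix_mul_mutationMatrix [Fintype ι] [Fintype ι'] {c : ι' → ι}
    (hc : Function.Injective c) (k : ι') (v : ι → R) :
    (1 : Matrix ι ι R).submatrix c id * mutationMatrix (c k) v
      = mutationMatrix k (v ∘ c) * (1 : Matrix ι ι R).submatrix c id := by
  ext j i
  have hrow : ((1 : Matrix ι ι R).submatrix c id * mutationMatrix (c k) v) j i
      = mutationMatrix (c k) v (c j) i := by
    simp [mul_apply, one_apply]
  rw [hrow, mutationMatrix_mul_apply]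
  by_cases hj : j = k <;> by_cases hi : i = c k <;>
    simp [mutationMatrix, one_apply, hc.eq_iff, hi, hj, eq_comm (a := c k)]

theorem transpose_mul_mul_mul_neg_eq_of_involutions [Fintype ι] [Fintype ι']
    {E Λ : Matrix ι ι R} {F : Matrix ι' ι' R} {B : Matrix ι ι' R} {P : Matrix ι' ι R}
    (hE : E * E = 1) (hF : F * F = 1) (hPE : P * E = F * P) (hΛB : Λ * -B = Pᵀ) :
    Eᵀ * Λ * E * -(E * B * Fᵀ) = Pᵀ :=
  calc Eᵀ * Λ * E * -(E * B * Fᵀ) = Eᵀ * (Λ * -B) * Fᵀ := by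
        simp only [Matrix.mul_neg, Matrix.neg_mul, Matrix.mul_assoc, ← Matrix.mul_assoc E E, hE,
          Matrix.one_mul]
    _ = Pᵀ * (F * F)ᵀ := by
        rw [hΛB, ← transpose_mul, hPE, transpose_mul, transpose_mul, Matrix.mul_assoc]
    _ = Pᵀ := by rw [hF, transpose_one, Matrix.mul_one]

end CommRing

/-- Matrix mutation in direction `k`; `κ` is the row that the principal part indexes by `k`. -/
def mutation (b : Matrix ι ι' ℤ) (κ : ι) (k : ι') : Matrix ι ι' ℤ :=
  of fun i j => if i = κ ∨ j = k then -(b i j)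
    else b i j + (b i k).sign * max 0 (b i k * b κ j)

theorem mutation_eq_mutationMatrix_mul_mul [Fintype ι] [Fintype ι'] (b : Matrix ι ι' ℤ)
    {κ : ι} {k : ι'} (hb : b κ k = 0) :
    b.mutation κ k = mutationMatrix κ (fun i => max 0 (-b i k)) * b
      * (mutationMatrix k (fun j => max 0 (b κ j)))ᵀ := by
  ext i j
  rw [mul_transpose_mutationMatrix_apply, mutationMatrix_mul_apply, mutationMatrix_mul_apply]
  by_cases hi : i = κ
  · by_cases hj : j = k <;> simp [mutation, hi, hj, hb]
  by_cases hj : j = k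
  · simp [mutation, hi, hj, hb]
  simp only [mutation, of_apply, hi, hj, or_self, if_false, hb, mul_zero, add_zero]
  rw [Int.sign_mul_max_zero_mul]
  ring

end Matrix

theorem mutation_preserves_compatibility_general
    {m n : ℕ} (hmn : n ≤ m)
    (b : Matrix (Fin m) (Fin n) ℤ) (Lam : Matrix (Fin m) (Fin m) ℤ)
    (k : Fin n)
    (hskewB : ∀ i j : Fin n, b (Fin.castLE hmn i) j = - b (Fin.castLE hmn j) i)
    (hcompat : Lam * (-b)
      = Matrix.of fun (i : Fin m) (j : Fin n) => if (i : ℕ) = (j : ℕ) then 1 else 0)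
    (E : Matrix (Fin m) (Fin m) ℤ)
    (hE : E = Matrix.of fun i j =>
      if j ≠ Fin.castLE hmn k then (if i = j then 1 else 0)
      else if i = Fin.castLE hmn k then -1
      else max 0 (-(b i k)))
    (b' : Matrix (Fin m) (Fin n) ℤ)
    (hb' : b' = Matrix.of fun i j =>
      if i = Fin.castLE hmn k ∨ j = k then -(b i j)
      else b i j + (b i k).sign * max 0 (b i k * b (Fin.castLE hmn k) j))
    (Lam' : Matrix (Fin m) (Fin m) ℤ)
    (hLam' : Lam' = Eᵀ * Lam * E) :
    Lam' * (-b')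
      = Matrix.of fun (i : Fin m) (j : Fin n) => if (i : ℕ) = (j : ℕ) then 1 else 0 := by
  have hbkk : b (Fin.castLE hmn k) k = 0 := by
    have := hskewB k k
    omega
  have hcol : (fun i => max 0 (-b i k)) ∘ Fin.castLE hmn
      = fun j => max 0 (b (Fin.castLE hmn k) j) :=
    funext fun j => by simp [hskewB j k]
  have hD : (of fun (i : Fin m) (j : Fin n) => if (i : ℕ) = (j : ℕ) then (1 : ℤ) else 0)
      = ((1 : Matrix (Fin m) (Fin m) ℤ).submatrix (Fin.castLE hmn) id)ᵀ := by
    ext i j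
    simp [one_apply, Fin.ext_iff, eq_comm]
  have hE : E = mutationMatrix (Fin.castLE hmn k) (fun i => max 0 (-b i k)) := hE
  have hb' : b' = b.mutation (Fin.castLE hmn k) k := hb'
  rw [hLam', hE, hb', hD, mutation_eq_mutationMatrix_mul_mul b hbkk, ← hcol]
  refine transpose_mul_mul_mul_neg_eq_of_involutions (mutationMatrix_mul_self _ _)
    (mutationMatrix_mul_self _ _) ?_ (hcompat.trans hD)
  exact one_submatrix_mul_mutationMatrix (Fin.castLE_injective hmn) k _

/-- Let `B̃` be an `m×n` integer matrix with skew-symmetric principal part and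
`Lam` a skew-symmetric `m×m` integer matrix with `Lam(−B̃) = [I_n; 0]`
(compatibility with `D = I_n`). If `B̃'` is the matrix mutation of `B̃` in
direction `k` (`b'_{ij} = −b_{ij}` if `i = k` or `j = k`, otherwise
`b'_{ij} = b_{ij} + sgn(b_{ik}) [b_{ik} b_{kj}]_+`) and `Lam' = Eᵀ Lam E` with `E`
the mutation involution matrix, then `Lam'(−B̃') = [I_n; 0]`: compatibility is
preserved under mutation. -/
theorem mutation_preserves_compatibility
    {m n : ℕ} (hmn : n ≤ m)
    (b : Matrix (Fin m) (Fin n) ℤ) (Lam : Matrix (Fin m) (Fin m) ℤ)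
    (k : Fin n)
    (hskewB : ∀ i j : Fin n, b (Fin.castLE hmn i) j = - b (Fin.castLE hmn j) i)
    (hskewLam : Lamᵀ = -Lam)
    (hcompat : Lam * (-b)
      = Matrix.of fun (i : Fin m) (j : Fin n) => if (i : ℕ) = (j : ℕ) then 1 else 0)
    (E : Matrix (Fin m) (Fin m) ℤ)
    (hE : E = Matrix.of fun i j =>
      if j ≠ Fin.castLE hmn k then (if i = j then 1 else 0)
      else if i = Fin.castLE hmn k then -1
      else max 0 (-(b i k)))
    (b' : Matrix (Fin m) (Fin n) ℤ)
    (hb' : b' = Matrix.of fun i j =>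
      if i = Fin.castLE hmn k ∨ j = k then -(b i j)
      else b i j + (b i k).sign * max 0 (b i k * b (Fin.castLE hmn k) j))
    (Lam' : Matrix (Fin m) (Fin m) ℤ)
    (hLam' : Lam' = Eᵀ * Lam * E) :
    Lam' * (-b')
      = Matrix.of fun (i : Fin m) (j : Fin n) => if (i : ℕ) = (j : ℕ) then 1 else 0 :=
  mutation_preserves_compatibility_general hmn b Lam k hskewB hcompat E hE b' hb' Lam' hLam'
end
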